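/- Suppose R_t^(i) > 0 for all t ∈ {1,...,T} and i ∈ {1,...,n}. Then any optimal solution (α_1*, ..., α_T*) of the problem of minimizing the empirical (1-δ)-quantile of {R^(1),...,R^(n)}, where R^(i) = max_t α_t R_t^(i), subject to Σ_t α_t = 1 and α_t ≥ 0, satisfies α_t* > 0 for every t. -/
import Mathlib


/-- The `k`-th smallest entry (0-indexed) of a real tuple; junk value `0` out of range. -/
noncomputable def orderStatR {n : ℕ} (r : Fin n → ℝ) (k : ℕ) : ℝ :=
  if h : k < n then r (Tuple.sort r ⟨k, h⟩) else 0

/-- Scaling by a nonnegative constant commutes with order statistics. -/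
lemma orderStatR_smul {n : ℕ} (r : Fin n → ℝ) (c : ℝ) (hc : 0 ≤ c) (k : ℕ) :
    orderStatR (fun i => c * r i) k = c * orderStatR r k := by
  unfold orderStatR
  split_ifs with h
  · have h1 : Monotone ((fun i => c * r i) ∘ Tuple.sort r) := by
      intro a b hab
      exact mul_le_mul_of_nonneg_left (Tuple.monotone_sort r hab) hc
    have h2 := Tuple.unique_monotone h1 (Tuple.monotone_sort (fun i => c * r i))
    exact (congrFun h2 ⟨k, h⟩).symm
  · ring

/-- If all the prediction errors `R t i` are positive, then any optimal solution `α⋆` of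
minimizing the empirical `(1-δ)`-quantile of the scores `R⁽ⁱ⁾ = max_t α_t R_t⁽ⁱ⁾` over the
probability simplex has all coordinates positive. -/
theorem optimal_alphas_pos
    (T n : ℕ) (hT : 2 ≤ T) (hn : 1 ≤ n) (δ : ℝ) (hδ : δ ∈ Set.Ioo (0 : ℝ) 1)
    (R : Fin T → Fin n → ℝ) (hR : ∀ t i, 0 < R t i)
    (αstar : Fin T → ℝ)
    (hfeas : (∀ t, 0 ≤ αstar t) ∧ ∑ t, αstar t = 1)
    (hopt : ∀ α : Fin T → ℝ, (∀ t, 0 ≤ α t) → ∑ t, α t = 1 →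
      orderStatR (fun i => ⨆ t, αstar t * R t i) (⌈(1 - δ) * (n : ℝ)⌉₊ - 1) ≤
        orderStatR (fun i => ⨆ t, α t * R t i) (⌈(1 - δ) * (n : ℝ)⌉₊ - 1)) :
    ∀ t, 0 < αstar t := by
  obtain ⟨hnn, hsum⟩ := hfeas
  by_contra hc
  push_neg at hc
  obtain ⟨t0, ht0⟩ := hc
  have ht0 : αstar t0 = 0 := le_antisymm ht0 (hnn t0)
  -- there is some positive coordinate
  have hTpos : 0 < T := by omega
  haveI : Nonempty (Fin T) := ⟨⟨0, hTpos⟩⟩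
  haveI : Nonempty (Fin n) := ⟨⟨0, hn⟩⟩
  have hex : ∃ t1, 0 < αstar t1 := by
    by_contra h
    push_neg at h
    have : ∑ t, αstar t = 0 := Finset.sum_eq_zero fun t _ => le_antisymm (h t) (hnn t)
    rw [hsum] at this; norm_num at this
  obtain ⟨t1, ht1⟩ := hex
  set S : Fin n → ℝ := fun i => ⨆ t, αstar t * R t i with hS
  have hbdd : ∀ (g : Fin T → ℝ), BddAbove (Set.range g) := fun g => (Set.finite_range g).bddAbove
  have hSpos : ∀ i, 0 < S i := by
    intro i
    have : αstar t1 * R t1 i ≤ S i := by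
      rw [hS]
      exact le_ciSup (hbdd fun t => αstar t * R t i) t1
    exact lt_of_lt_of_le (mul_pos ht1 (hR t1 i)) this
  -- choose ε
  set ε : ℝ := min (2⁻¹) (Finset.univ.inf' Finset.univ_nonempty
      (fun i => S i / (R t0 i + S i))) with hε
  have hεpos : 0 < ε := by
    apply lt_min (by norm_num)
    apply Finset.lt_inf'_iff _ |>.mpr
    intro i _
    have h1 := hR t0 i
    have h2 := hSpos i
    exact div_pos h2 (by linarith)
  have hεlt : ε < 1 := lt_of_le_of_lt (min_le_left _ _) (by norm_num)
  have hεkey : ∀ i, ε * R t0 i ≤ (1 - ε) * S i := by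
    intro i
    have h1 : ε ≤ S i / (R t0 i + S i) :=
      le_trans (min_le_right _ _) (Finset.inf'_le _ (Finset.mem_univ i))
    have hden : 0 < R t0 i + S i := by have := hR t0 i; have := hSpos i; linarith
    rw [le_div_iff₀ hden] at h1
    have := hR t0 i
    nlinarith [hSpos i]
  -- new candidate
  set α : Fin T → ℝ := fun t => if t = t0 then ε else (1 - ε) * αstar t with hα
  have hαnn : ∀ t, 0 ≤ α t := by
    intro t
    simp only [hα]
    split_ifs
    · exact hεpos.le
    · exact mul_nonneg (by linarith) (hnn t)
  have hαsum : ∑ t, α t = 1 := by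
    have hsplit : ∑ t, α t = α t0 + ∑ t ∈ Finset.univ.erase t0, α t :=
      (Finset.add_sum_erase _ _ (Finset.mem_univ t0)).symm
    have h1 : ∑ t ∈ Finset.univ.erase t0, α t
        = (1 - ε) * ∑ t ∈ Finset.univ.erase t0, αstar t := by
      rw [Finset.mul_sum]
      refine Finset.sum_congr rfl fun t ht => ?_
      simp only [hα, if_neg (Finset.ne_of_mem_erase ht)]
    have h2 : ∑ t ∈ Finset.univ.erase t0, αstar t = 1 := by
      have := Finset.add_sum_erase Finset.univ αstar (Finset.mem_univ t0)
      rw [hsum] at this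
      linarith [this]
    have h3 : α t0 = ε := by simp [hα]
    rw [hsplit, h1, h2, h3]; ring
  -- the new scores are exactly `(1-ε) • S`
  have hscore : (fun i => ⨆ t, α t * R t i) = fun i => (1 - ε) * S i := by
    funext i
    apply le_antisymm
    · apply ciSup_le
      intro t
      by_cases h : t = t0
      · rw [h]
        have hαt0 : α t0 = ε := by simp [hα]
        rw [hαt0]
        exact hεkey i
      · have hle : αstar t * R t i ≤ S i := by
          rw [hS]
          exact le_ciSup (hbdd fun t => αstar t * R t i) t
        have : α t * R t i = (1 - ε) * (αstar t * R t i) := by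
          simp [hα, if_neg h]; ring
        rw [this]
        exact mul_le_mul_of_nonneg_left hle (by linarith)
    · have hrw : (1 - ε) * S i = ⨆ t, (1 - ε) * (αstar t * R t i) :=
        Real.mul_iSup_of_nonneg (by linarith) _
      rw [hrw]
      apply ciSup_le
      intro t
      by_cases h : t = t0
      · rw [h, ht0]
        have h1 : α t0 * R t0 i ≤ ⨆ t, α t * R t i :=
          le_ciSup (hbdd fun t => α t * R t i) t0
        have h2 : (0:ℝ) ≤ α t0 * R t0 i := mul_nonneg (hαnn t0) (hR t0 i).le
        have h3 : (1 - ε) * (0 * R t0 i) = 0 := by ring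
        rw [h3]
        linarith
      · have : (1 - ε) * (αstar t * R t i) = α t * R t i := by
          simp [hα, if_neg h]; ring
        rw [this]
        exact le_ciSup (hbdd fun t => α t * R t i) t
  -- the quantile index is in range
  set k : ℕ := ⌈(1 - δ) * (n : ℝ)⌉₊ - 1 with hk
  have hkn : k < n := by
    have hceil : ⌈(1 - δ) * (n : ℝ)⌉₊ ≤ n := by
      apply Nat.ceil_le.mpr
      have h1 : (1 - δ) * (n : ℝ) ≤ 1 * n := by
        apply mul_le_mul_of_nonneg_right _ (Nat.cast_nonneg n)
        linarith [hδ.1]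
      simpa using h1
    omega
  have hOpos : 0 < orderStatR S k := by
    unfold orderStatR
    rw [dif_pos hkn]
    exact hSpos _
  have hcontra := hopt α hαnn hαsum
  rw [hscore] at hcontra
  rw [orderStatR_smul S (1 - ε) (by linarith) k] at hcontra
  nlinarith [hcontra, hOpos, hεpos]
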